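/- The Fibonacci-run graph R_n has the same number of vertices as the Fibonacci cube Γ_n; i.e., the number of binary strings r of length n such that r00 is run-constrained equals the number of binary strings of length n with no two consecutive 1s. -/

import Mathlib

/-- Run-constrained binary strings: every maximal run of `1`s is immediately
followed by a strictly longer run of `0`s. -/
inductive RunConstrained : List Bool → Prop
  | nil : RunConstrained []
  | zero {l : List Bool} : RunConstrained l → RunConstrained (false :: l)
  | block {l : List Bool} (r s : ℕ) (hr : 1 ≤ r) (hs : r < s) :
      RunConstrained l →
      RunConstrained (List.replicate r true ++ List.replicate s false ++ l)

/-- Hamming distance between two binary strings (of the same length). -/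
def hammingD (α β : List Bool) : ℕ := (List.zipWith bne α β).count true

/-- The Fibonacci-run graph `R n`: vertices are strings `r` of length `n` with
`r00` run-constrained; two vertices are adjacent iff they differ in exactly one
coordinate. -/
noncomputable def fibRunGraph (n : ℕ) :
    SimpleGraph {l : List Bool // l.length = n ∧ RunConstrained (l ++ [false, false])} :=
  SimpleGraph.fromRel fun a b => hammingD a.1 b.1 = 1

namespace FRaux

inductive St where
  | fail : St
  | zs : St
  | on : ℕ → St
  | nd : ℕ → St
deriving DecidableEq

def step : St → Bool → St
  | .fail, _ => .fail
  | .zs, false => .zs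
  | .zs, true => .on 0
  | .on r, true => .on (r+1)
  | .on r, false => .nd r
  | .nd 0, false => .zs
  | .nd (d+1), false => .nd d
  | .nd _, true => .fail

def runS : St → List Bool → St
  | s, [] => s
  | s, b :: l => runS (step s b) l

@[simp] lemma runS_nil (s : St) : runS s [] = s := rfl
@[simp] lemma runS_cons (s : St) (b l) : runS s (b :: l) = runS (step s b) l := rfl

lemma runS_append (s : St) (a b : List Bool) :
    runS s (a ++ b) = runS (runS s a) b := by
  induction a generalizing s with
  | nil => rfl
  | cons x t ih => simp [ih]

@[simp] lemma runS_fail (l : List Bool) : runS .fail l = .fail := by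
  induction l with
  | nil => rfl
  | cons b t ih => simpa [step] using ih

lemma runS_on_trues (k m : ℕ) :
    runS (.on k) (List.replicate m true) = .on (k + m) := by
  induction m generalizing k with
  | zero => rfl
  | succ m ih => simp [List.replicate_succ, step, ih]; omega

lemma runS_zs_falses (m : ℕ) : runS .zs (List.replicate m false) = .zs := by
  induction m with
  | zero => rfl
  | succ m ih => simp [List.replicate_succ, step, ih]

lemma runS_nd_falses (d k : ℕ) :
    runS (.nd d) (List.replicate (d + 1 + k) false) = .zs := by
  induction d with
  | zero =>
      rw [show (0:ℕ) + 1 + k = k + 1 by omega, List.replicate_succ]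
      simpa [step] using runS_zs_falses k
  | succ d ih =>
      have : d + 1 + 1 + k = (d + 1 + k) + 1 := by omega
      rw [this, List.replicate_succ]
      simpa [step] using ih

lemma rc_run {l : List Bool} (h : RunConstrained l) : runS .zs l = .zs := by
  induction h with
  | nil => rfl
  | zero h ih => simpa [step] using ih
  | block r s hr hs h ih =>
      obtain ⟨a, rfl⟩ : ∃ a, r = a + 1 := ⟨r - 1, by omega⟩
      obtain ⟨k, rfl⟩ : ∃ k, s = a + 1 + 1 + k := ⟨s - a - 2, by omega⟩
      rw [runS_append, runS_append]
      rw [List.replicate_succ]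
      simp only [runS_cons]
      rw [show step St.zs true = St.on 0 from rfl, runS_on_trues]
      have h2 : a + 1 + 1 + k = (a + 1 + k) + 1 := by omega
      rw [h2, List.replicate_succ]
      simp only [runS_cons]
      rw [show step (St.on (0 + a)) false = St.nd a by simp [step], runS_nd_falses, ih]

lemma nd_extract : ∀ (d : ℕ) (l : List Bool), runS (.nd d) l = .zs →
    ∃ l', l = List.replicate (d + 1) false ++ l' ∧ runS .zs l' = .zs := by
  intro d
  induction d with
  | zero =>
      intro l h
      match l with
      | [] => simp [runS] at h
      | true :: t => simp [step] at h
      | false :: t => exact ⟨t, by simp [List.replicate_succ], by simpa [step] using h⟩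
  | succ d ih =>
      intro l h
      match l with
      | [] => simp [runS] at h
      | true :: t => simp [step] at h
      | false :: t =>
          obtain ⟨l', rfl, hl'⟩ := ih t (by simpa [step] using h)
          exact ⟨l', by simp [List.replicate_succ], hl'⟩

lemma run_rc : ∀ (n : ℕ) (l : List Bool), l.length ≤ n →
    (runS .zs l = .zs → RunConstrained l) ∧
    (∀ r, runS (.on r) l = .zs → RunConstrained (List.replicate (r + 1) true ++ l)) := by
  intro n
  induction n with
  | zero =>
      intro l hl
      have : l = [] := by cases l <;> simp_all
      subst this
      refine ⟨fun _ => .nil, fun r h => ?_⟩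
      simp [runS] at h
  | succ n ih =>
      intro l hl
      constructor
      · intro h
        match l with
        | [] => exact .nil
        | false :: t =>
            exact .zero ((ih t (by simp at hl; omega)).1
              (by simpa [step] using h))
        | true :: t =>
            have := (ih t (by simp at hl; omega)).2 0
              (by simpa [step] using h)
            simpa using this
      · intro r h
        match l with
        | [] => simp [runS] at h
        | true :: t =>
            have := (ih t (by simp at hl; omega)).2 (r + 1)
              (by simpa [step] using h)
            have heq : List.replicate (r + 1 + 1) true ++ t
                = List.replicate (r + 1) true ++ true :: t := by
              rw [List.replicate_succ' (n := r+1)]; simp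
            rwa [heq] at this
        | false :: t =>
            have ht : runS (.nd r) t = .zs := by simpa [step] using h
            obtain ⟨l', rfl, hl'⟩ := nd_extract r t ht
            have hlen : l'.length ≤ n := by
              simp [List.length_append] at hl ⊢; omega
            have hrc : RunConstrained l' := (ih l' hlen).1 hl'
            have := RunConstrained.block (l := l') (r + 1) (r + 2) (by omega) (by omega) hrc
            have heq : List.replicate (r + 1) true ++ List.replicate (r + 2) false ++ l'
                = List.replicate (r + 1) true ++ false :: (List.replicate (r + 1) false ++ l') := by
              simp [List.replicate_succ]
            rwa [heq] at this

lemma rc_iff (l : List Bool) : RunConstrained l ↔ runS .zs l = .zs :=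
  ⟨rc_run, fun h => (run_rc l.length l le_rfl).1 h⟩

def acc : St → Bool
  | .zs => true
  | .on r => r == 0
  | .nd d => d ≤ 1
  | .fail => false

def pa (l : List Bool) : Bool := acc (runS .zs l)

lemma pa_iff (l : List Bool) : RunConstrained (l ++ [false, false]) ↔ pa l = true := by
  rw [rc_iff, runS_append, pa]
  rcases hs : runS .zs l with _ | _ | r | d
  · simp [step, acc]
  · simp [step, acc]
  · rcases r with _ | r <;> simp [step, acc]
  · rcases d with _ | _ | d <;> simp [step, acc]

def pb : List Bool → Bool
  | [] => true
  | [_] => true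
  | a :: b :: l => (!(a && b)) && pb (b :: l)

lemma pb_iff (l : List Bool) : ¬ [true, true] <:+: l ↔ pb l = true := by
  induction l with
  | nil => simp [pb]
  | cons a t ih =>
      match t with
      | [] =>
          simp [pb]
          intro h
          have := h.length_le
          simp at this
      | b :: t' =>
          rw [List.infix_cons_iff]
          have hpre : [true, true] <+: a :: b :: t' ↔ (a = true ∧ b = true) := by
            constructor
            · intro h
              rw [List.cons_prefix_cons] at h
              obtain ⟨ha, h⟩ := h
              rw [List.cons_prefix_cons] at h
              exact ⟨ha.symm, h.1.symm⟩
            · rintro ⟨rfl, rfl⟩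
              exact ⟨t', rfl⟩
          rw [pb]
          simp only [not_or, hpre, ih]
          cases a <;> cases b <;> simp

end FRaux

namespace FRaux

def enum : ℕ → List (List Bool)
  | 0 => [[]]
  | n + 1 => ((enum n).map (false :: ·)) ++ ((enum n).map (true :: ·))

lemma mem_enum : ∀ (n : ℕ) (l : List Bool), l ∈ enum n ↔ l.length = n := by
  intro n
  induction n with
  | zero => intro l; simp [enum, List.length_eq_zero_iff, eq_comm]
  | succ n ih =>
      intro l
      simp only [enum, List.mem_append, List.mem_map]
      constructor
      · rintro (⟨a, ha, rfl⟩ | ⟨a, ha, rfl⟩) <;> simp [(ih a).mp ha]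
      · intro h
        match l with
        | false :: t => exact Or.inl ⟨t, (ih t).mpr (by simpa using h), rfl⟩
        | true :: t => exact Or.inr ⟨t, (ih t).mpr (by simpa using h), rfl⟩

lemma nodup_enum (n : ℕ) : (enum n).Nodup := by
  induction n with
  | zero => simp [enum]
  | succ n ih =>
      refine List.Nodup.append (ih.map ?_) (ih.map ?_) ?_
      · intro a b h; simpa using h
      · intro a b h; simpa using h
      · intro x hx hy
        obtain ⟨a, _, rfl⟩ := List.mem_map.mp hx
        obtain ⟨b, _, hb⟩ := List.mem_map.mp hy
        simp at hb

lemma length_filter_succ (p : List Bool → Bool) (n : ℕ) :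
    ((enum (n + 1)).filter p).length =
      ((enum n).filter (fun l => p (false :: l))).length
        + ((enum n).filter (fun l => p (true :: l))).length := by
  simp [enum, List.filter_append, List.filter_map, Function.comp_def]

def aC (n : ℕ) : ℕ := ((enum n).filter pa).length
def bC (n : ℕ) : ℕ := ((enum n).filter pb).length

lemma pa_false (l : List Bool) : pa (false :: l) = pa l := rfl

lemma pb_false (l : List Bool) : pb (false :: l) = pb l := by
  cases l <;> simp [pb]

lemma bC_rec (n : ℕ) : bC (n + 2) = bC (n + 1) + bC n := by
  have h0 : ((enum (n+1)).filter (fun l => pb (false :: l))).length = bC (n + 1) := by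
    rw [List.filter_congr (fun x _ => pb_false x)]; rfl
  have h1 : ((enum n).filter (fun l => pb (true :: false :: l))).length = bC n := by
    rw [List.filter_congr (q := pb) (fun x _ => by simp [pb, pb_false x])]; rfl
  have h2 : ((enum n).filter (fun l => pb (true :: true :: l))) = [] := by
    rw [List.filter_congr (q := fun _ => false) (fun x _ => by simp [pb]), List.filter_false]
  rw [bC, length_filter_succ, h0, length_filter_succ, h1, h2]
  simp

/-! ### takeWhile/dropWhile decomposition -/

lemma head_dropWhile (l : List Bool) (b : Bool) :
    (l.dropWhile id).head? = some b → b = false := by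
  induction l with
  | nil => simp
  | cons a t ih =>
      cases a
      · intro h; simp [List.dropWhile] at h; simpa using h.symm
      · intro h; exact ih (by simpa [List.dropWhile] using h)

lemma takeWhile_rep (l : List Bool) :
    l.takeWhile id = List.replicate (l.takeWhile id).length true := by
  rw [List.eq_replicate_length]
  intro b hb
  simpa using List.mem_takeWhile_imp hb

lemma tw_dw (t : ℕ) (R : List Bool) (h : R.head? ≠ some true) :
    (List.replicate t true ++ R).takeWhile id = List.replicate t true ∧
      (List.replicate t true ++ R).dropWhile id = R := by
  induction t with
  | zero =>
      simp only [List.replicate_zero, List.nil_append]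
      match R with
      | [] => simp
      | true :: R' => simp at h
      | false :: R' => simp [List.takeWhile, List.dropWhile]
  | succ t ih =>
      simp [List.replicate_succ, List.takeWhile_cons, List.dropWhile_cons, ih]

lemma decomp (l : List Bool) :
    ∃ t R, l = List.replicate t true ++ R ∧ R.head? ≠ some true ∧
      l.takeWhile id = List.replicate t true ∧ l.dropWhile id = R := by
  refine ⟨(l.takeWhile id).length, l.dropWhile id, ?_, ?_, (takeWhile_rep l), rfl⟩
  · conv_lhs => rw [← List.takeWhile_append_dropWhile (p := id) (l := l)]
    rw [← takeWhile_rep]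
  · intro h
    exact absurd (head_dropWhile l true h) (by simp)

/-! ### key computations -/

lemma runS_rep_true (t : ℕ) (m : List Bool) :
    runS .zs (List.replicate (t + 1) true ++ m) = runS (.on t) m := by
  rw [runS_append, List.replicate_succ]
  simp only [runS_cons]
  rw [show step .zs true = .on 0 from rfl, runS_on_trues]
  norm_num

lemma runS_zs_trues (t : ℕ) : runS .zs (List.replicate (t + 1) true) = .on t := by
  simpa using runS_rep_true t []

lemma cons_rep (t : ℕ) (X : List Bool) :
    true :: (List.replicate t true ++ X) = List.replicate (t + 1) true ++ X := by
  simp [List.replicate_succ]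

lemma K1 (t : ℕ) (R : List Bool) (h : R.head? ≠ some true) :
    pa (List.replicate (t + 1) true ++ false :: R) = pa (List.replicate t true ++ R) := by
  unfold pa
  rw [runS_rep_true]
  match t, R with
  | 0, [] => simp [step, acc]
  | 0, true :: R' => simp at h
  | 0, false :: R' => simp [step]
  | s + 1, [] =>
      rw [List.append_nil, runS_zs_trues]
      cases s <;> simp [step, acc]
  | s + 1, true :: R' => simp at h
  | s + 1, false :: R' =>
      rw [runS_rep_true]
      simp [step]

lemma qa_shape (l : List Bool) (hne : l ≠ []) (hq : pa (true :: l) = true) :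
    ∃ t R₂, l = List.replicate t true ++ false :: R₂ ∧ R₂.head? ≠ some true ∧
      l.takeWhile id = List.replicate t true ∧ l.dropWhile id = false :: R₂ := by
  obtain ⟨t, R, hl, hR, htw, hdw⟩ := decomp l
  match R, hR with
  | [], _ =>
      exfalso
      rw [List.append_nil] at hl
      subst hl
      have ht : t ≠ 0 := by
        intro h; subst h; simp at hne
      obtain ⟨s, rfl⟩ : ∃ s, t = s + 1 := ⟨t - 1, by omega⟩
      rw [show (true :: List.replicate (s+1) true) = List.replicate (s + 1 + 1) true by
            rw [List.replicate_succ (n := s + 1)]] at hq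
      rw [pa, runS_zs_trues] at hq
      simp [acc] at hq
  | true :: R₂, hR => simp at hR
  | false :: R₂, _ =>
      refine ⟨t, R₂, hl, ?_, htw, hdw⟩
      intro hhd
      match R₂, hhd with
      | true :: R₃, _ =>
          rw [hl, cons_rep, pa, runS_rep_true] at hq
          simp [step, acc] at hq

def Dm (l : List Bool) : List Bool := l.takeWhile id ++ (l.dropWhile id).tail
def Jm (w : List Bool) : List Bool := w.takeWhile id ++ false :: w.dropWhile id

lemma count_true (n : ℕ) :
    ((enum (n + 1)).filter (fun l => pa (true :: l))).length = aC n := by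
  rw [aC,
    ← List.toFinset_card_of_nodup ((nodup_enum (n+1)).filter _),
    ← List.toFinset_card_of_nodup ((nodup_enum n).filter _)]
  refine Finset.card_nbij' Dm Jm ?_ ?_ ?_ ?_
  · intro l hl
    simp only [Finset.mem_coe, List.mem_toFinset, List.mem_filter, mem_enum] at hl ⊢
    obtain ⟨hlen, hq⟩ := hl
    obtain ⟨t, R₂, hl, hR₂, htw, hdw⟩ := qa_shape l (by rintro rfl; simp at hlen) hq
    have hD : Dm l = List.replicate t true ++ R₂ := by
      rw [Dm, htw, hdw]; rfl
    constructor
    · rw [hD]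
      rw [hl] at hlen
      simp at hlen ⊢
      omega
    · rw [hD, ← K1 t R₂ hR₂, ← cons_rep, ← hl]
      exact hq
  · intro w hw
    simp only [Finset.mem_coe, List.mem_toFinset, List.mem_filter, mem_enum] at hw ⊢
    obtain ⟨hlen, hp⟩ := hw
    obtain ⟨t, R, hw, hR, htw, hdw⟩ := decomp w
    have hJ : Jm w = List.replicate t true ++ false :: R := by
      rw [Jm, htw, hdw]
    constructor
    · rw [hJ]
      rw [hw] at hlen
      simp at hlen ⊢
      omega
    · rw [hJ, cons_rep, K1 t R hR, ← hw]
      exact hp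
  · intro l hl
    simp only [Finset.mem_coe, List.mem_toFinset, List.mem_filter, mem_enum] at hl
    obtain ⟨hlen, hq⟩ := hl
    obtain ⟨t, R₂, hl, hR₂, htw, hdw⟩ := qa_shape l (by rintro rfl; simp at hlen) hq
    have hD : Dm l = List.replicate t true ++ R₂ := by
      rw [Dm, htw, hdw]; rfl
    rw [Jm, hD, (tw_dw t R₂ hR₂).1, (tw_dw t R₂ hR₂).2, ← hl]
  · intro w hw
    simp only [Finset.mem_coe, List.mem_toFinset, List.mem_filter, mem_enum] at hw
    obtain ⟨t, R, hw, hR, htw, hdw⟩ := decomp w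
    have hJ : Jm w = List.replicate t true ++ false :: R := by
      rw [Jm, htw, hdw]
    have hfR : (false :: R).head? ≠ some true := by simp
    rw [Dm, hJ, (tw_dw t (false :: R) hfR).1, (tw_dw t (false :: R) hfR).2]
    simp only [List.tail_cons]
    exact hw.symm

lemma aC_rec (n : ℕ) : aC (n + 2) = aC (n + 1) + aC n := by
  have h0 : ((enum (n+1)).filter (fun l => pa (false :: l))).length = aC (n + 1) := by
    rw [List.filter_congr (q := pa) (fun x _ => pa_false x)]; rfl
  rw [aC, length_filter_succ, h0, count_true n]

lemma main_count (n : ℕ) : aC n = bC n := by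
  induction n using Nat.twoStepInduction with
  | zero => decide
  | one => decide
  | more n ih1 ih2 => rw [aC_rec, bC_rec, ih1, ih2]

lemma card_eq (n : ℕ) (p : List Bool → Bool) (P : List Bool → Prop)
    (hP : ∀ l, P l ↔ p l = true) :
    Nat.card {l : List Bool // l.length = n ∧ P l} = ((enum n).filter p).length := by
  have e : {l : List Bool // l.length = n ∧ P l} ≃ {l // l ∈ ((enum n).filter p).toFinset} :=
    Equiv.subtypeEquivRight (fun l => by
      simp only [List.mem_toFinset, List.mem_filter, mem_enum, hP l]
      try tauto)
  rw [Nat.card_congr e, Nat.card_eq_fintype_card, Fintype.card_coe,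
    List.toFinset_card_of_nodup ((nodup_enum n).filter p)]

end FRaux

theorem stmt_7 (n : ℕ) :
    Nat.card {l : List Bool // l.length = n ∧ RunConstrained (l ++ [false, false])} =
      Nat.card {l : List Bool // l.length = n ∧ ¬ [true, true] <:+: l} := by
  rw [FRaux.card_eq n FRaux.pa _ (fun l => FRaux.pa_iff l),
    FRaux.card_eq n FRaux.pb _ (fun l => FRaux.pb_iff l)]
  exact FRaux.main_count n
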